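/- Let $f:\mathbb{R}^q\to\mathbb{R}$ be continuous with $(|x|^2+1)^{-1/2}f(x)\to 0$ as $|x|\to\infty$. Define $\mathcal{S}(f)$ on the unit sphere $S^q\subset\mathbb{R}^{q+1}$ by $\mathcal{S}(f)(u)=|u_{q+1}|\,f(u_1/u_{q+1},\dots,u_q/u_{q+1})$ for $u_{q+1}\neq 0$ and $\mathcal{S}(f)(u)=0$ for $u_{q+1}=0$. Then $\mathcal{S}(f)$ is a continuous even function on $S^q$ vanishing on the equator $\{u\in S^q: u_{q+1}=0\}$. -/

import Mathlib

/-!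
On the sphere off the equator, `|u_{q+1}|⁻¹ = √(|x|² + 1)` for the dehomogenized point
`x = (u₁/u_{q+1}, …, u_q/u_{q+1})`, so `S(f)(u) = f(x) / √(|x|² + 1)`. Approaching the equator
along the sphere sends `x` to infinity, where this quotient tends to `0` by hypothesis.
-/

open Filter Topology

namespace SphereWrap

variable {q : ℕ}

noncomputable def dehomogenize (u : EuclideanSpace ℝ (Fin (q + 1))) : EuclideanSpace ℝ (Fin q) :=
  WithLp.toLp 2 fun j => u j.castSucc / u (Fin.last q)

noncomputable def wrap (f : EuclideanSpace ℝ (Fin q) → ℝ) (u : EuclideanSpace ℝ (Fin (q + 1))) :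
    ℝ :=
  if u (Fin.last q) = 0 then 0 else |u (Fin.last q)| * f (dehomogenize u)

theorem dehomogenize_neg (u : EuclideanSpace ℝ (Fin (q + 1))) :
    dehomogenize (-u) = dehomogenize u := by
  simp only [dehomogenize, PiLp.neg_apply, neg_div_neg_eq]

theorem wrap_neg (f : EuclideanSpace ℝ (Fin q) → ℝ) (u : EuclideanSpace ℝ (Fin (q + 1))) :
    wrap f (-u) = wrap f u := by
  simp only [wrap, dehomogenize_neg, PiLp.neg_apply, neg_eq_zero, abs_neg]

theorem norm_sq_dehomogenize_add_one {u : EuclideanSpace ℝ (Fin (q + 1))}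
    (hlast : u (Fin.last q) ≠ 0) :
    ‖dehomogenize u‖ ^ 2 + 1 = ‖u‖ ^ 2 / u (Fin.last q) ^ 2 := by
  rw [EuclideanSpace.real_norm_sq_eq, EuclideanSpace.real_norm_sq_eq, Fin.sum_univ_castSucc]
  simp only [dehomogenize, div_pow, ← Finset.sum_div]
  field_simp

theorem sqrt_norm_sq_dehomogenize_add_one {u : EuclideanSpace ℝ (Fin (q + 1))} (hu : ‖u‖ = 1)
    (hlast : u (Fin.last q) ≠ 0) :
    √(‖dehomogenize u‖ ^ 2 + 1) = |u (Fin.last q)|⁻¹ := by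
  rw [norm_sq_dehomogenize_add_one hlast, hu, one_pow, one_div, Real.sqrt_inv,
    Real.sqrt_sq_eq_abs]

theorem wrap_eq_div_sqrt (f : EuclideanSpace ℝ (Fin q) → ℝ)
    {u : EuclideanSpace ℝ (Fin (q + 1))} (hu : ‖u‖ = 1) (hlast : u (Fin.last q) ≠ 0) :
    wrap f u = f (dehomogenize u) / √(‖dehomogenize u‖ ^ 2 + 1) := by
  rw [wrap, if_neg hlast, sqrt_norm_sq_dehomogenize_add_one hu hlast, div_inv_eq_mul, mul_comm]

theorem continuousAt_dehomogenize {u : EuclideanSpace ℝ (Fin (q + 1))}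
    (hlast : u (Fin.last q) ≠ 0) : ContinuousAt dehomogenize u := by
  refine (PiLp.continuous_toLp 2 _).continuousAt.comp (continuousAt_pi.2 fun j => ?_)
  exact (PiLp.continuous_apply 2 _ _).continuousAt.div
    (PiLp.continuous_apply 2 _ _).continuousAt hlast

theorem continuousAt_wrap {f : EuclideanSpace ℝ (Fin q) → ℝ} (hf : Continuous f)
    {u : EuclideanSpace ℝ (Fin (q + 1))} (hlast : u (Fin.last q) ≠ 0) :
    ContinuousAt (wrap f) u := by
  have hlast_cont := PiLp.continuous_apply 2 (fun _ => ℝ) (Fin.last q)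
  have heq : (fun v => |v (Fin.last q)| * f (dehomogenize v)) =ᶠ[𝓝 u] wrap f := by
    filter_upwards [hlast_cont.continuousAt.eventually_ne hlast] with v hv
    rw [wrap, if_neg hv]
  exact (hlast_cont.abs.continuousAt.mul
    (hf.continuousAt.comp (continuousAt_dehomogenize hlast))).congr heq

theorem tendsto_dehomogenize_cocompact {u : EuclideanSpace ℝ (Fin (q + 1))}
    (hlast : u (Fin.last q) = 0) :
    Tendsto dehomogenize (𝓝[{v | ‖v‖ = 1 ∧ v (Fin.last q) ≠ 0}] u) (cocompact _) := by
  rw [← Metric.cobounded_eq_cocompact, ← tendsto_norm_atTop_iff_cobounded]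
  have habs : Tendsto (fun v : EuclideanSpace ℝ (Fin (q + 1)) => |v (Fin.last q)|)
      (𝓝[{v | ‖v‖ = 1 ∧ v (Fin.last q) ≠ 0}] u) (𝓝[>] 0) := by
    refine tendsto_nhdsWithin_iff.2
      ⟨?_, eventually_nhdsWithin_of_forall fun v hv => abs_pos.2 hv.2⟩
    have := (PiLp.continuous_apply 2 (fun _ => ℝ) (Fin.last q)).abs.tendsto u
    simpa [hlast] using this.mono_left nhdsWithin_le_nhds
  refine tendsto_atTop_mono' _ ?_
    (tendsto_atTop_add_const_right _ (-1) (tendsto_inv_nhdsGT_zero.comp habs))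
  filter_upwards [self_mem_nhdsWithin] with v ⟨hv, hvlast⟩
  have h := sqrt_norm_sq_dehomogenize_add_one hv hvlast
  have hle : √(‖dehomogenize v‖ ^ 2 + 1) ≤ ‖dehomogenize v‖ + 1 :=
    Real.sqrt_le_iff.2 ⟨by positivity, by nlinarith [norm_nonneg (dehomogenize v)]⟩
  simp only [Function.comp_apply]
  linarith

theorem continuousWithinAt_wrap_of_last_eq_zero {f : EuclideanSpace ℝ (Fin q) → ℝ}
    (hdecay : Tendsto (fun x => f x / √(‖x‖ ^ 2 + 1)) (cocompact _) (𝓝 0))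
    {u : EuclideanSpace ℝ (Fin (q + 1))} (hlast : u (Fin.last q) = 0) :
    ContinuousWithinAt (wrap f) {v | ‖v‖ = 1} u := by
  have hsplit : {v : EuclideanSpace ℝ (Fin (q + 1)) | ‖v‖ = 1} =
      {v | ‖v‖ = 1 ∧ v (Fin.last q) ≠ 0} ∪ {v | ‖v‖ = 1 ∧ v (Fin.last q) = 0} := by
    ext v
    by_cases h : v (Fin.last q) = 0 <;> simp [h]
  rw [ContinuousWithinAt, wrap, if_pos hlast, hsplit, nhdsWithin_union, tendsto_sup]
  constructor
  · refine (hdecay.comp (tendsto_dehomogenize_cocompact hlast)).congr' ?_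
    filter_upwards [self_mem_nhdsWithin] with v ⟨hv, hvlast⟩
    exact (wrap_eq_div_sqrt f hv hvlast).symm
  · refine tendsto_const_nhds.congr' ?_
    filter_upwards [self_mem_nhdsWithin] with v ⟨_, hvlast⟩
    rw [wrap, if_pos hvlast]

theorem continuousOn_wrap {f : EuclideanSpace ℝ (Fin q) → ℝ} (hf : Continuous f)
    (hdecay : Tendsto (fun x => f x / √(‖x‖ ^ 2 + 1)) (cocompact _) (𝓝 0)) :
    ContinuousOn (wrap f) {v | ‖v‖ = 1} := fun u _ => by
  by_cases hlast : u (Fin.last q) = 0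
  · exact continuousWithinAt_wrap_of_last_eq_zero hdecay hlast
  · exact (continuousAt_wrap hf hlast).continuousWithinAt

end SphereWrap

/-- The wrapping `S(f)(u) = |u_{q+1}| f(u₁/u_{q+1},…,u_q/u_{q+1})` (set to `0` on the
equator) of a continuous function `f` on `ℝ^q` with `(|x|²+1)^{-1/2} f(x) → 0` at
infinity is a continuous even function on the sphere `S^q` vanishing on the equator. -/
theorem wrapping_continuous_even (q : ℕ) (f : EuclideanSpace ℝ (Fin q) → ℝ)
    (hf : Continuous f)
    (hdecay : Tendsto (fun x : EuclideanSpace ℝ (Fin q) =>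
      f x / Real.sqrt (‖x‖ ^ 2 + 1)) (cocompact _) (nhds 0)) :
    let Sf : EuclideanSpace ℝ (Fin (q + 1)) → ℝ :=
      fun u => if u (Fin.last q) = 0 then 0
        else |u (Fin.last q)| * f (WithLp.toLp 2 (fun j => u j.castSucc / u (Fin.last q)))
    ContinuousOn Sf {u : EuclideanSpace ℝ (Fin (q + 1)) | ‖u‖ = 1} ∧
    (∀ u : EuclideanSpace ℝ (Fin (q + 1)), ‖u‖ = 1 → Sf (-u) = Sf u) ∧
    (∀ u : EuclideanSpace ℝ (Fin (q + 1)), ‖u‖ = 1 → u (Fin.last q) = 0 → Sf u = 0) := by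
  show ContinuousOn (SphereWrap.wrap f) _ ∧
    (∀ u, ‖u‖ = 1 → SphereWrap.wrap f (-u) = SphereWrap.wrap f u) ∧
    (∀ u, ‖u‖ = 1 → u (Fin.last q) = 0 → SphereWrap.wrap f u = 0)
  exact ⟨SphereWrap.continuousOn_wrap hf hdecay, fun u _ => SphereWrap.wrap_neg f u,
    fun u _ hlast => if_pos hlast⟩
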